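/- The function 𝒴(x) = [∏_{s=1}^{2m-1} x²·ϑ_{q⁴}(x^{-2}p^s)·ϑ_{q⁴}(x²q²p^s)/(ϑ_{q⁴}(x²p^s)·ϑ_{q⁴}(x^{-2}q²p^s))]² satisfies 𝒴(q²·x) = 𝒴(x) for all x in its domain, for any positive integer m and 0 < |p|, |q| < 1. -/

import Mathlib

open Complex Finset

/-- The q-Pochhammer infinite product `(x;a)_∞ = ∏_{n≥0} (1 - x aⁿ)`. -/
noncomputable def qPoch (x a : ℂ) : ℂ := ∏' n : ℕ, (1 - x * a ^ n)

/-- The Jacobi theta function `ϑ_a(x) = (x;a)_∞ (a x⁻¹;a)_∞ (a;a)_∞`. -/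
noncomputable def theta (a x : ℂ) : ℂ := qPoch x a * qPoch (a * x⁻¹) a * qPoch a a

/-- The exchange function `𝒴(x)` of eq. (2.10), for positive `m`. -/
noncomputable def Yexch (q p : ℂ) (m : ℕ) (x : ℂ) : ℂ :=
  (∏ s ∈ Finset.Icc 1 (2 * m - 1),
    x ^ 2 * theta (q ^ 4) (x⁻¹ ^ 2 * p ^ (s : ℤ)) * theta (q ^ 4) (x ^ 2 * q ^ 2 * p ^ (s : ℤ)) /
      (theta (q ^ 4) (x ^ 2 * p ^ (s : ℤ)) * theta (q ^ 4) (x⁻¹ ^ 2 * q ^ 2 * p ^ (s : ℤ)))) ^ 2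

/-!
Every theta value in a factor of `𝒴` has argument `x^{±2}` times a constant, so under
`x ↦ q²x` it moves by `q^{±4}` and, by quasi-periodicity, picks up the factor `-y⁻¹` resp. `-y`.
These factors cancel against the change of the prefactor `x²`.
-/

lemma multipliable_one_sub_mul_pow {a : ℂ} (ha : ‖a‖ < 1) (z : ℂ) :
    Multipliable fun n : ℕ => 1 - z * a ^ n := by
  have hsum : Summable fun n : ℕ => -(z * a ^ n) :=
    ((summable_geometric_of_norm_lt_one ha).mul_left z).neg
  simpa only [sub_eq_add_neg] using Complex.multipliable_one_add_of_summable hsum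

lemma qPoch_eq_one_sub_mul {a : ℂ} (ha : ‖a‖ < 1) (y : ℂ) :
    qPoch y a = (1 - y) * qPoch (a * y) a := by
  have hmul : Multipliable fun n : ℕ => 1 - y * a ^ (n + 1) :=
    (multipliable_one_sub_mul_pow ha (a * y)).congr fun n => by ring
  rw [qPoch, tprod_eq_zero_mul' (f := fun n => 1 - y * a ^ n) hmul, pow_zero, mul_one, qPoch]
  congr 1
  exact tprod_congr fun n => by ring

lemma theta_mul_self {a : ℂ} (ha : ‖a‖ < 1) (ha0 : a ≠ 0) {y : ℂ} (hy : y ≠ 0) :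
    theta a (a * y) = -y⁻¹ * theta a y := by
  have hinv : a * (a * y)⁻¹ = y⁻¹ := by field_simp
  have hfac : (1 : ℂ) - y⁻¹ = -y⁻¹ * (1 - y) := by field_simp; ring
  rw [theta, theta, hinv, qPoch_eq_one_sub_mul ha y, qPoch_eq_one_sub_mul ha y⁻¹, hfac]
  ring

lemma theta_eq_neg_mul_theta_mul {a : ℂ} (ha : ‖a‖ < 1) (ha0 : a ≠ 0) {y : ℂ} (hy : y ≠ 0) :
    theta a y = -y * theta a (a * y) := by
  rw [theta_mul_self ha ha0 hy]
  field_simp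

/-- The factor of `𝒴(x)` indexed by `s`, with `P = pˢ`. -/
noncomputable def yFactor (q P x : ℂ) : ℂ :=
  x ^ 2 * theta (q ^ 4) (x⁻¹ ^ 2 * P) * theta (q ^ 4) (x ^ 2 * q ^ 2 * P) /
    (theta (q ^ 4) (x ^ 2 * P) * theta (q ^ 4) (x⁻¹ ^ 2 * q ^ 2 * P))

lemma yFactor_q_sq_mul {q : ℂ} (hq0 : q ≠ 0) (hq1 : ‖q‖ < 1) {P : ℂ} (hP : P ≠ 0)
    {x : ℂ} (hx : x ≠ 0) :
    yFactor q P (q ^ 2 * x) = yFactor q P x := by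
  have ha : ‖q ^ 4‖ < 1 := by
    rw [norm_pow]; exact pow_lt_one₀ (norm_nonneg q) hq1 (by norm_num)
  have ha0 : q ^ 4 ≠ 0 := pow_ne_zero 4 hq0
  have h₁ : theta (q ^ 4) ((q ^ 2 * x)⁻¹ ^ 2 * P) =
      -((q ^ 2 * x)⁻¹ ^ 2 * P) * theta (q ^ 4) (x⁻¹ ^ 2 * P) := by
    have harg : q ^ 4 * ((q ^ 2 * x)⁻¹ ^ 2 * P) = x⁻¹ ^ 2 * P := by field_simp
    rw [theta_eq_neg_mul_theta_mul ha ha0 (by positivity), harg]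
  have h₂ : theta (q ^ 4) ((q ^ 2 * x) ^ 2 * q ^ 2 * P) =
      -(x ^ 2 * q ^ 2 * P)⁻¹ * theta (q ^ 4) (x ^ 2 * q ^ 2 * P) := by
    rw [← theta_mul_self ha ha0 (by positivity)]
    ring_nf
  have h₃ : theta (q ^ 4) ((q ^ 2 * x) ^ 2 * P) =
      -(x ^ 2 * P)⁻¹ * theta (q ^ 4) (x ^ 2 * P) := by
    rw [← theta_mul_self ha ha0 (by positivity)]
    ring_nf
  have h₄ : theta (q ^ 4) ((q ^ 2 * x)⁻¹ ^ 2 * q ^ 2 * P) =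
      -((q ^ 2 * x)⁻¹ ^ 2 * q ^ 2 * P) * theta (q ^ 4) (x⁻¹ ^ 2 * q ^ 2 * P) := by
    have harg : q ^ 4 * ((q ^ 2 * x)⁻¹ ^ 2 * q ^ 2 * P) = x⁻¹ ^ 2 * q ^ 2 * P := by
      field_simp
    rw [theta_eq_neg_mul_theta_mul ha ha0 (by positivity), harg]
  have hscalar : (q ^ 2 * x) ^ 2 * -((q ^ 2 * x)⁻¹ ^ 2 * P) * -(x ^ 2 * q ^ 2 * P)⁻¹ /
      (-(x ^ 2 * P)⁻¹ * -((q ^ 2 * x)⁻¹ ^ 2 * q ^ 2 * P)) = x ^ 2 := by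
    field_simp
  rw [yFactor, yFactor, h₁, h₂, h₃, h₄]
  linear_combination
    (theta (q ^ 4) (x⁻¹ ^ 2 * P) * theta (q ^ 4) (x ^ 2 * q ^ 2 * P) /
      (theta (q ^ 4) (x ^ 2 * P) * theta (q ^ 4) (x⁻¹ ^ 2 * q ^ 2 * P))) * hscalar

theorem Y_q_sq_periodic_general (q p : ℂ) (hq0 : 0 < ‖q‖) (hq1 : ‖q‖ < 1)
    (hp0 : 0 < ‖p‖)
    (m : ℕ) (x : ℂ) (hx : x ≠ 0) :
    Yexch q p m (q ^ 2 * x) = Yexch q p m x := by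
  have hq : q ≠ 0 := norm_pos_iff.mp hq0
  have hp : p ≠ 0 := norm_pos_iff.mp hp0
  show (∏ s ∈ Icc 1 (2 * m - 1), yFactor q (p ^ (s : ℤ)) (q ^ 2 * x)) ^ 2 =
    (∏ s ∈ Icc 1 (2 * m - 1), yFactor q (p ^ (s : ℤ)) x) ^ 2
  congr 1
  exact prod_congr rfl fun s _ => yFactor_q_sq_mul hq hq1 (zpow_ne_zero _ hp) hx

theorem Y_q_sq_periodic (q p : ℂ) (hq0 : 0 < ‖q‖) (hq1 : ‖q‖ < 1)
    (hp0 : 0 < ‖p‖) (hp1 : ‖p‖ < 1)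
    (m : ℕ) (hm : 0 < m) (x : ℂ) (hx : x ≠ 0)
    (hden : ∀ s ∈ Finset.Icc 1 (2 * m - 1),
      theta (q ^ 4) (x ^ 2 * p ^ (s : ℤ)) ≠ 0 ∧
      theta (q ^ 4) (x⁻¹ ^ 2 * q ^ 2 * p ^ (s : ℤ)) ≠ 0)
    (hden' : ∀ s ∈ Finset.Icc 1 (2 * m - 1),
      theta (q ^ 4) ((q ^ 2 * x) ^ 2 * p ^ (s : ℤ)) ≠ 0 ∧
      theta (q ^ 4) ((q ^ 2 * x)⁻¹ ^ 2 * q ^ 2 * p ^ (s : ℤ)) ≠ 0) :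
    Yexch q p m (q ^ 2 * x) = Yexch q p m x :=
  Y_q_sq_periodic_general q p hq0 hq1 hp0 m x hx
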